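/- Let (X_1,…,X_d) ∈ M_n(ℝ)^d. For X ∈ M_n(ℝ), let τ_X be the algebra endomorphism of ℝ[e_1,…,e_n] determined by substituting e_j ↦ Σ_{l=1}^n X_{j,l} e_l (that is, (τ_X · p)(e) = p(Xe)); τ_X maps the space ℝ[e_1,…,e_n]_{2k} of homogeneous polynomials of degree 2k to itself, and Σ_{i=1}^d τ_{X_i} restricts to a linear endomorphism of this finite-dimensional real vector space, whose spectral radius is defined as ρ(L) = lim_{m→∞} ‖L^m‖^{1/m}. Then lim_{k→∞} ρ( Σ_{i=1}^d τ_{X_i} restricted to ℝ[e_1,…,e_n]_{2k} )^{1/2k} exists and equals the joint spectral radius ρ(X_1,…,X_d). -/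

import Mathlib

open Filter

/-- Operator norm of a square real matrix (with respect to the Euclidean norm). -/
noncomputable def matOpNormR {m : Type*} [Fintype m] [DecidableEq m] (A : Matrix m m ℝ) : ℝ :=
  ‖Matrix.toEuclideanCLM (𝕜 := ℝ) A‖

/-- Supremum of operator norms of words of length `k` in `X`. -/
noncomputable def wordSupR {ι m : Type*} [Fintype ι] [Fintype m] [DecidableEq m]
    (X : ι → Matrix m m ℝ) (k : ℕ) : ℝ :=
  ⨆ f : Fin k → ι, matOpNormR (List.ofFn fun j => X (f j)).prod

/-- The joint spectral radius `ρ(X₁,…,X_d) = limsup_k (sup over words of length k)^(1/k)`. -/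
noncomputable def jsrR {ι m : Type*} [Fintype ι] [Fintype m] [DecidableEq m]
    (X : ι → Matrix m m ℝ) : ℝ :=
  Filter.limsup (fun k : ℕ => wordSupR X k ^ ((k : ℝ)⁻¹)) Filter.atTop

/-- The algebra endomorphism `τ_X` of `ℝ[e₁,…,e_n]` substituting `e_j ↦ Σ_l X_{j,l} e_l`,
i.e. `(τ_X · p)(e) = p(Xe)`. -/
noncomputable def tauAct {n : ℕ} (X : Matrix (Fin n) (Fin n) ℝ) :
    MvPolynomial (Fin n) ℝ →ₐ[ℝ] MvPolynomial (Fin n) ℝ :=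
  MvPolynomial.aeval fun j => ∑ l, MvPolynomial.C (X j l) * MvPolynomial.X l

/-- The matrix, with respect to the monomial basis of the space `ℝ[e₁,…,e_n]_{2k}` of
homogeneous polynomials of degree `2k` (indexed by multisets of size `2k` of variables),
of the restriction of the linear endomorphism `Σᵢ τ_{Xᵢ}` to that space. -/
noncomputable def actMat {n d : ℕ} (X : Fin d → Matrix (Fin n) (Fin n) ℝ) (k : ℕ) :
    Matrix (Sym (Fin n) (2 * k)) (Sym (Fin n) (2 * k)) ℝ :=
  Matrix.of fun s t =>
    MvPolynomial.coeff (Multiset.toFinsupp (s : Multiset (Fin n)))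
      (∑ i, tauAct (X i)
        (MvPolynomial.monomial (Multiset.toFinsupp (t : Multiset (Fin n))) 1))

namespace Stmt19
open MvPolynomial

variable {n d : ℕ}

noncomputable abbrev lin (A : Matrix (Fin n) (Fin n) ℝ) (j : Fin n) : MvPolynomial (Fin n) ℝ :=
  ∑ l, C (A j l) * X l

lemma tauAct_def (A : Matrix (Fin n) (Fin n) ℝ) : tauAct A = aeval (lin A) := rfl

lemma lin_isHomogeneous (A : Matrix (Fin n) (Fin n) ℝ) (j : Fin n) :
    (lin A j).IsHomogeneous 1 :=
  IsHomogeneous.sum _ _ _ fun l _ => isHomogeneous_C_mul_X _ _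

lemma degree_mem_support {p : MvPolynomial (Fin n) ℝ} {D : ℕ} (hp : p.IsHomogeneous D)
    {v : Fin n →₀ ℕ} (hv : v ∈ p.support) : v.degree = D := by
  by_contra h
  exact (mem_support_iff.mp hv) (hp.coeff_eq_zero h)

lemma tauAct_isHomogeneous (A : Matrix (Fin n) (Fin n) ℝ) {p : MvPolynomial (Fin n) ℝ} {D : ℕ}
    (hp : p.IsHomogeneous D) : (tauAct A p).IsHomogeneous D := by
  conv_lhs => rw [p.as_sum]
  rw [map_sum]
  apply IsHomogeneous.sum
  intro v hv
  rw [tauAct_def, aeval_monomial]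
  have h1 : (v.prod fun i k => lin A i ^ k).IsHomogeneous D := by
    have h2 := IsHomogeneous.prod v.support (fun i => lin A i ^ v i) (fun i => v i)
      (fun i _ => by simpa using (lin_isHomogeneous A i).pow (v i))
    rw [Finsupp.prod]
    have hd : ∑ i ∈ v.support, v i = D := degree_mem_support hp hv
    rwa [hd] at h2
  simpa using h1.C_mul (coeff v p)

variable {k : ℕ}

noncomputable abbrev tM (s : Sym (Fin n) k) : Fin n →₀ ℕ :=
  Multiset.toFinsupp (s : Multiset (Fin n))

lemma tM_injective : Function.Injective (tM (n := n) (k := k)) := by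
  intro s t h
  have := Multiset.toFinsupp.injective h
  exact Sym.coe_injective this

lemma degree_tM (s : Sym (Fin n) k) : (tM s).degree = k := by
  have : (tM s).degree = (tM s).sum fun _ => id := by
    rw [Finsupp.degree, Finsupp.sum]; rfl
  rw [this, Multiset.toFinsupp_sum_eq]
  exact s.2

/-- decomposition of a homogeneous polynomial of degree `k` over `Sym` monomials -/
lemma homog_decomp {p : MvPolynomial (Fin n) ℝ} (hp : p.IsHomogeneous k) :
    p = ∑ s : Sym (Fin n) k, monomial (tM s) (coeff (tM s) p) := by
  ext u
  rw [coeff_sum]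
  by_cases hu : u.degree = k
  · have hu' : Multiset.card (Finsupp.toMultiset u) = k := by
      rw [Finsupp.card_toMultiset]
      simpa [Finsupp.degree_apply, Finsupp.sum] using hu
    set s₀ : Sym (Fin n) k := ⟨Finsupp.toMultiset u, hu'⟩ with hs₀
    have hts : tM s₀ = u := by
      simp [tM, hs₀, Finsupp.toMultiset_toFinsupp]
    rw [Finset.sum_eq_single s₀]
    · rw [hts, coeff_monomial, if_pos rfl]
    · intro b _ hb
      rw [coeff_monomial, if_neg]
      intro hbu
      exact hb (tM_injective (by rw [hbu, hts]))
    · intro h; exact absurd (Finset.mem_univ s₀) h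
  · rw [hp.coeff_eq_zero hu]
    symm
    apply Finset.sum_eq_zero
    intro s _
    rw [coeff_monomial, if_neg]
    intro hsu
    exact hu (by rw [← hsu]; exact degree_tM s)

/-- the summed substitution operator -/
noncomputable def Lf (X : Fin d → Matrix (Fin n) (Fin n) ℝ) :
    MvPolynomial (Fin n) ℝ → MvPolynomial (Fin n) ℝ :=
  fun p => ∑ i, tauAct (X i) p

lemma Lf_isHomogeneous (X : Fin d → Matrix (Fin n) (Fin n) ℝ) {p : MvPolynomial (Fin n) ℝ}
    {D : ℕ} (hp : p.IsHomogeneous D) : (Lf X p).IsHomogeneous D :=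
  IsHomogeneous.sum _ _ _ fun i _ => tauAct_isHomogeneous (X i) hp

lemma actMat_apply (X : Fin d → Matrix (Fin n) (Fin n) ℝ) (s t : Sym (Fin n) (2 * k)) :
    actMat X k s t = coeff (tM s) (Lf X (monomial (tM t) 1)) := rfl

lemma monomial_isHomogeneous (t : Sym (Fin n) k) :
    (monomial (tM t) (1 : ℝ)).IsHomogeneous k :=
  isHomogeneous_monomial _ (degree_tM t)

lemma Lf_coeff (X : Fin d → Matrix (Fin n) (Fin n) ℝ) {q : MvPolynomial (Fin n) ℝ}
    (hq : q.IsHomogeneous (2 * k)) (s : Sym (Fin n) (2 * k)) :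
    coeff (tM s) (Lf X q) = ∑ t : Sym (Fin n) (2 * k), actMat X k s t * coeff (tM t) q := by
  conv_lhs => rw [homog_decomp hq]
  have hLf : ∀ r : MvPolynomial (Fin n) ℝ, Lf X r = ∑ i, tauAct (X i) r := fun _ => rfl
  rw [hLf, coeff_sum]
  conv_rhs =>
    rw [Finset.sum_congr rfl (fun t _ => by
      rw [actMat_apply, hLf, coeff_sum, Finset.sum_mul])]
  rw [Finset.sum_comm]
  apply Finset.sum_congr rfl
  intro i _
  rw [map_sum, coeff_sum]
  apply Finset.sum_congr rfl
  intro t _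
  have : (monomial (tM t)) (coeff (tM t) q) = coeff (tM t) q • (monomial (tM t)) (1:ℝ) := by
    rw [smul_monomial, smul_eq_mul, mul_one]
  rw [this, map_smul, coeff_smul, smul_eq_mul, mul_comm]

lemma coeff_iter (X : Fin d → Matrix (Fin n) (Fin n) ℝ) {q : MvPolynomial (Fin n) ℝ}
    (hq : q.IsHomogeneous (2 * k)) (m : ℕ) (s : Sym (Fin n) (2 * k)) :
    coeff (tM s) ((Lf X)^[m] q) = ∑ t : Sym (Fin n) (2 * k), (actMat X k ^ m) s t * coeff (tM t) q := by
  induction m generalizing s with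
  | zero =>
    simp only [Function.iterate_zero, id_eq, pow_zero, Matrix.one_apply]
    rw [Finset.sum_congr rfl (fun t _ => by rw [ite_mul, one_mul, zero_mul]),
      Finset.sum_ite_eq (Finset.univ) s (fun t => coeff (tM t) q)]
    simp
  | succ m ih =>
    rw [Function.iterate_succ_apply', Lf_coeff X (iter_homog m) s]
    · rw [pow_succ']
      conv_rhs =>
        rw [Finset.sum_congr rfl (fun t _ => by
          rw [Matrix.mul_apply, Finset.sum_mul])]
      rw [Finset.sum_comm]
      apply Finset.sum_congr rfl
      intro r _
      rw [ih r, Finset.mul_sum]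
      apply Finset.sum_congr rfl
      intro t _
      ring
  where
    iter_homog : ∀ m : ℕ, ((Lf X)^[m] q).IsHomogeneous (2 * k) := by
      intro m
      induction m with
      | zero => simpa using hq
      | succ m ih => rw [Function.iterate_succ_apply']; exact Lf_isHomogeneous X ih

lemma tauAct_comp (A B : Matrix (Fin n) (Fin n) ℝ) (p : MvPolynomial (Fin n) ℝ) :
    tauAct A (tauAct B p) = tauAct (B * A) p := by
  have h : (tauAct A).comp (tauAct B) = tauAct (B * A) := by
    apply MvPolynomial.algHom_ext
    intro j
    simp only [AlgHom.comp_apply, tauAct_def, aeval_X, lin, map_sum, map_mul, aeval_C,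
      algebraMap_eq]
    rw [Finset.sum_congr rfl (fun l _ => Finset.mul_sum _ _ _)]
    rw [Finset.sum_comm]
    apply Finset.sum_congr rfl
    intro r _
    rw [Matrix.mul_apply, map_sum, Finset.sum_mul]
    apply Finset.sum_congr rfl
    intro l _
    rw [map_mul]
    ring
  calc tauAct A (tauAct B p) = ((tauAct A).comp (tauAct B)) p := rfl
    _ = tauAct (B * A) p := by rw [h]

lemma tauAct_one (p : MvPolynomial (Fin n) ℝ) : tauAct (1 : Matrix (Fin n) (Fin n) ℝ) p = p := by
  have h : tauAct (1 : Matrix (Fin n) (Fin n) ℝ) = aeval X := by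
    apply MvPolynomial.algHom_ext
    intro j
    simp [tauAct_def, lin, Matrix.one_apply, ite_smul]
  rw [h, aeval_X_left, AlgHom.id_apply]

noncomputable def wordProd (X : Fin d → Matrix (Fin n) (Fin n) ℝ) {m : ℕ} (f : Fin m → Fin d) :
    Matrix (Fin n) (Fin n) ℝ :=
  (List.ofFn fun j => X (f j)).prod

lemma wordProd_cons (X : Fin d → Matrix (Fin n) (Fin n) ℝ) {m : ℕ} (i : Fin d)
    (f : Fin m → Fin d) : wordProd X (Fin.cons i f) = X i * wordProd X f := by
  unfold wordProd
  rw [List.ofFn_succ]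
  simp [Fin.cons_zero, Fin.cons_succ]

lemma Lf_iter_eq_sum_words (X : Fin d → Matrix (Fin n) (Fin n) ℝ) (m : ℕ)
    (p : MvPolynomial (Fin n) ℝ) :
    (Lf X)^[m] p = ∑ f : Fin m → Fin d, tauAct (wordProd X f) p := by
  induction m generalizing p with
  | zero =>
    rw [Function.iterate_zero, id_eq, Fintype.sum_unique]
    rw [show wordProd X (default : Fin 0 → Fin d) = 1 from rfl, tauAct_one]
  | succ m ih =>
    rw [Function.iterate_succ_apply, ih (Lf X p)]
    have step : ∀ f : Fin m → Fin d, tauAct (wordProd X f) (Lf X p)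
        = ∑ i, tauAct (wordProd X (Fin.cons i f)) p := by
      intro f
      rw [show Lf X p = ∑ i, tauAct (X i) p from rfl, map_sum]
      apply Finset.sum_congr rfl
      intro i _
      rw [tauAct_comp, ← wordProd_cons]
    rw [Finset.sum_congr rfl (fun f _ => step f)]
    rw [← Fintype.sum_prod_type']
    have hbij : Function.Bijective
        (fun x : (Fin m → Fin d) × Fin d => (Fin.cons x.2 x.1 : Fin (m+1) → Fin d)) := by
      constructor
      · intro a b hab
        have h0 := congrFun hab 0
        simp only [Fin.cons_zero] at h0
        have h1 : a.1 = b.1 := by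
          funext j
          have := congrFun hab j.succ
          simpa using this
        exact Prod.ext h1 h0
      · intro g
        exact ⟨(Fin.tail g, g 0), Fin.cons_self_tail g⟩
    exact Fintype.sum_bijective _ hbij _ _ (fun x => rfl)

lemma eval_tauAct (A : Matrix (Fin n) (Fin n) ℝ) (v : Fin n → ℝ) (p : MvPolynomial (Fin n) ℝ) :
    eval v (tauAct A p) = eval (A.mulVec v) p := by
  have h : (eval v).comp (tauAct A).toRingHom = eval (A.mulVec v) := by
    apply MvPolynomial.ringHom_ext
    · intro c
      simp [tauAct_def]
    · intro j
      simp [tauAct_def, lin, Matrix.mulVec, dotProduct]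
  exact DFunLike.congr_fun h p

lemma eval_iter (X : Fin d → Matrix (Fin n) (Fin n) ℝ) (m : ℕ) (v : Fin n → ℝ)
    (p : MvPolynomial (Fin n) ℝ) :
    eval v ((Lf X)^[m] p) = ∑ f : Fin m → Fin d, eval ((wordProd X f).mulVec v) p := by
  rw [Lf_iter_eq_sum_words, map_sum]
  exact Finset.sum_congr rfl fun f _ => eval_tauAct _ _ _

/-! ### ℓ¹ norm of coefficients -/

noncomputable def l1 (p : MvPolynomial (Fin n) ℝ) : ℝ := ∑ u ∈ p.support, |coeff u p|

lemma l1_nonneg (p : MvPolynomial (Fin n) ℝ) : 0 ≤ l1 p :=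
  Finset.sum_nonneg fun _ _ => abs_nonneg _

lemma l1_eq_sum_superset {p : MvPolynomial (Fin n) ℝ} {t : Finset (Fin n →₀ ℕ)}
    (h : p.support ⊆ t) : l1 p = ∑ u ∈ t, |coeff u p| := by
  apply Finset.sum_subset h
  intro u _ hu
  rw [notMem_support_iff.mp hu, abs_zero]

lemma abs_coeff_le_l1 (p : MvPolynomial (Fin n) ℝ) (u : Fin n →₀ ℕ) : |coeff u p| ≤ l1 p := by
  by_cases hu : u ∈ p.support
  · exact Finset.single_le_sum (f := fun v => |coeff v p|) (fun v _ => abs_nonneg _) hu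
  · rw [notMem_support_iff.mp hu, abs_zero]; exact l1_nonneg p

lemma l1_add_le (p q : MvPolynomial (Fin n) ℝ) : l1 (p + q) ≤ l1 p + l1 q := by
  classical
  rw [l1_eq_sum_superset (support_add (p := p) (q := q)),
    l1_eq_sum_superset (Finset.subset_union_left (s₁ := p.support) (s₂ := q.support)),
    l1_eq_sum_superset (Finset.subset_union_right (s₁ := p.support) (s₂ := q.support)),
    ← Finset.sum_add_distrib]
  apply Finset.sum_le_sum
  intro u _
  rw [coeff_add]
  exact abs_add_le _ _

lemma l1_sum_le {ι : Type*} (s : Finset ι) (g : ι → MvPolynomial (Fin n) ℝ) :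
    l1 (∑ i ∈ s, g i) ≤ ∑ i ∈ s, l1 (g i) := by
  classical
  induction s using Finset.induction with
  | empty => simp [l1]
  | insert _ _ hx ih =>
    rename_i a s
    rw [Finset.sum_insert hx, Finset.sum_insert hx]
    exact (l1_add_le _ _).trans (by linarith)

lemma l1_smul (c : ℝ) (p : MvPolynomial (Fin n) ℝ) : l1 (c • p) ≤ |c| * l1 p := by
  rw [l1_eq_sum_superset (support_smul (a := c) (f := p))]
  unfold l1
  rw [Finset.mul_sum]
  apply Finset.sum_le_sum
  intro u _
  rw [coeff_smul, smul_eq_mul, abs_mul]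

lemma l1_C_mul (c : ℝ) (p : MvPolynomial (Fin n) ℝ) : l1 (C c * p) ≤ |c| * l1 p := by
  rw [C_mul']; exact l1_smul c p

lemma l1_X_mul (l : Fin n) (p : MvPolynomial (Fin n) ℝ) : l1 (X l * p) = l1 p := by
  unfold l1
  rw [support_X_mul, Finset.sum_map]
  apply Finset.sum_congr rfl
  intro u _
  rw [show (addLeftEmbedding (Finsupp.single l 1)) u = Finsupp.single l 1 + u from rfl,
    coeff_X_mul]

noncomputable abbrev linC (c : Fin n → ℝ) : MvPolynomial (Fin n) ℝ := ∑ j, C (c j) * X j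

lemma l1_linC_mul (c : Fin n → ℝ) (p : MvPolynomial (Fin n) ℝ) :
    l1 (linC c * p) ≤ (∑ j, |c j|) * l1 p := by
  have h : linC c * p = ∑ j, C (c j) * (X j * p) := by
    rw [Finset.sum_mul]
    exact Finset.sum_congr rfl fun j _ => by ring
  rw [h]
  calc l1 (∑ j, C (c j) * (X j * p)) ≤ ∑ j, l1 (C (c j) * (X j * p)) := l1_sum_le _ _
    _ ≤ ∑ j, |c j| * l1 (X j * p) := Finset.sum_le_sum fun j _ => l1_C_mul _ _
    _ = (∑ j, |c j|) * l1 p := by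
        rw [Finset.sum_mul]
        exact Finset.sum_congr rfl fun j _ => by rw [l1_X_mul]

lemma l1_one : l1 (1 : MvPolynomial (Fin n) ℝ) = 1 := by
  have h1 : (1 : MvPolynomial (Fin n) ℝ).support ⊆ {0} := by
    rw [show (1 : MvPolynomial (Fin n) ℝ) = monomial 0 1 from rfl]
    rw [support_monomial]
    split <;> simp
  rw [l1_eq_sum_superset h1, Finset.sum_singleton, coeff_zero_one, abs_one]

lemma l1_linC_pow_mul (c : Fin n → ℝ) (m : ℕ) (p : MvPolynomial (Fin n) ℝ) :
    l1 (linC c ^ m * p) ≤ (∑ j, |c j|) ^ m * l1 p := by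
  induction m with
  | zero => simp
  | succ m ih =>
    have h : linC c ^ (m + 1) * p = linC c * (linC c ^ m * p) := by ring
    rw [h]
    calc l1 (linC c * (linC c ^ m * p)) ≤ (∑ j, |c j|) * l1 (linC c ^ m * p) := l1_linC_mul _ _
      _ ≤ (∑ j, |c j|) * ((∑ j, |c j|) ^ m * l1 p) := by
          apply mul_le_mul_of_nonneg_left ih
          exact Finset.sum_nonneg fun j _ => abs_nonneg _
      _ = (∑ j, |c j|) ^ (m + 1) * l1 p := by ring

lemma l1_linC_pow (c : Fin n → ℝ) (m : ℕ) :
    l1 (linC c ^ m) ≤ (∑ j, |c j|) ^ m := by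
  simpa [l1_one] using l1_linC_pow_mul c m 1

lemma l1_prod_linC_pow (g : Fin n → Fin n → ℝ) (e : Fin n → ℕ) :
    l1 (∏ i, linC (g i) ^ e i) ≤ ∏ i, (∑ j, |g i j|) ^ e i := by
  classical
  have key : ∀ s : Finset (Fin n),
      l1 (∏ i ∈ s, linC (g i) ^ e i) ≤ ∏ i ∈ s, (∑ j, |g i j|) ^ e i := by
    intro s
    induction s using Finset.induction with
    | empty => simp [l1_one]
    | insert _ _ hx ih =>
      rename_i a s
      rw [Finset.prod_insert hx, Finset.prod_insert hx]
      calc l1 (linC (g a) ^ e a * ∏ i ∈ s, linC (g i) ^ e i)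
          ≤ (∑ j, |g a j|) ^ e a * l1 (∏ i ∈ s, linC (g i) ^ e i) := l1_linC_pow_mul _ _ _
        _ ≤ (∑ j, |g a j|) ^ e a * ∏ i ∈ s, (∑ j, |g i j|) ^ e i := by
            apply mul_le_mul_of_nonneg_left ih
            positivity
  exact key Finset.univ

lemma tauAct_monomial_one (A : Matrix (Fin n) (Fin n) ℝ) (w : Fin n →₀ ℕ) :
    tauAct A (monomial w 1) = ∏ i, linC (A i) ^ w i := by
  rw [tauAct_def, aeval_monomial, map_one, one_mul]
  rw [Finsupp.prod_pow]

lemma degree_eq_sum_univ (w : Fin n →₀ ℕ) : w.degree = ∑ i, w i := by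
  rw [Finsupp.degree]
  apply Finset.sum_subset (Finset.subset_univ _)
  intro i _ hi
  exact Finsupp.notMem_support_iff.mp hi

lemma l1_tauAct_monomial (A : Matrix (Fin n) (Fin n) ℝ) (w : Fin n →₀ ℕ) :
    l1 (tauAct A (monomial w 1)) ≤ (∑ j, ∑ l, |A j l|) ^ w.degree := by
  rw [tauAct_monomial_one]
  calc l1 (∏ i, linC (A i) ^ w i) ≤ ∏ i, (∑ l, |A i l|) ^ w i := l1_prod_linC_pow _ _
    _ ≤ ∏ i, (∑ j, ∑ l, |A j l|) ^ w i := by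
        apply Finset.prod_le_prod
        · intro i _; positivity
        · intro i _
          apply pow_le_pow_left₀ (by positivity)
          exact Finset.single_le_sum (f := fun j => ∑ l, |A j l|)
            (fun j _ => by positivity) (Finset.mem_univ i)
    _ = (∑ j, ∑ l, |A j l|) ^ (∑ i, w i) := Finset.prod_pow_eq_pow_sum _ _ _
    _ = (∑ j, ∑ l, |A j l|) ^ w.degree := by rw [degree_eq_sum_univ]

/-! ### Euclidean norms -/

noncomputable def pen2 {ι : Type*} [Fintype ι] (v : ι → ℝ) : ℝ :=
  ‖(WithLp.equiv 2 (ι → ℝ)).symm v‖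

lemma pen2_nonneg {ι : Type*} [Fintype ι] (v : ι → ℝ) : 0 ≤ pen2 v := norm_nonneg _

lemma pen2_eq_sqrt {ι : Type*} [Fintype ι] (v : ι → ℝ) :
    pen2 v = Real.sqrt (∑ i, v i ^ 2) := by
  rw [pen2, EuclideanSpace.norm_eq]
  congr 1
  apply Finset.sum_congr rfl
  intro i _
  rw [show ((WithLp.equiv 2 (ι → ℝ)).symm v) i = v i from rfl, Real.norm_eq_abs, sq_abs]

lemma mulVec_pen2_le {ι : Type*} [Fintype ι] [DecidableEq ι] (A : Matrix ι ι ℝ) (v : ι → ℝ) :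
    pen2 (A.mulVec v) ≤ matOpNormR A * pen2 v := by
  have h : Matrix.toEuclideanCLM (𝕜 := ℝ) A ((WithLp.equiv 2 (ι → ℝ)).symm v)
      = (WithLp.equiv 2 (ι → ℝ)).symm (A.mulVec v) := Matrix.toEuclideanCLM_toLp A v
  calc pen2 (A.mulVec v) = ‖Matrix.toEuclideanCLM (𝕜 := ℝ) A ((WithLp.equiv 2 (ι → ℝ)).symm v)‖ := by
        rw [pen2, h]
    _ ≤ matOpNormR A * pen2 v := (Matrix.toEuclideanCLM (𝕜 := ℝ) A).le_opNorm _

lemma opNormR_le_bound {ι : Type*} [Fintype ι] [DecidableEq ι] (A : Matrix ι ι ℝ) {c : ℝ}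
    (hc : 0 ≤ c) (h : ∀ v, pen2 (A.mulVec v) ≤ c * pen2 v) : matOpNormR A ≤ c := by
  apply ContinuousLinearMap.opNorm_le_bound _ hc
  intro x
  have hx : x = (WithLp.equiv 2 (ι → ℝ)).symm (WithLp.equiv 2 (ι → ℝ) x) := rfl
  have h2 : Matrix.toEuclideanCLM (𝕜 := ℝ) A ((WithLp.equiv 2 (ι → ℝ)).symm (WithLp.equiv 2 (ι → ℝ) x))
      = (WithLp.equiv 2 (ι → ℝ)).symm (A.mulVec (WithLp.equiv 2 (ι → ℝ) x)) :=
    Matrix.toEuclideanCLM_toLp A _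
  calc ‖Matrix.toEuclideanCLM (𝕜 := ℝ) A x‖
      = pen2 (A.mulVec (WithLp.equiv 2 (ι → ℝ) x)) := by
        rw [pen2, ← h2, ← hx]
    _ ≤ c * pen2 (WithLp.equiv 2 (ι → ℝ) x) := h _
    _ = c * ‖x‖ := by rw [pen2, ← hx]

lemma abs_dot_mulVec_le {ι : Type*} [Fintype ι] [DecidableEq ι] (a b : ι → ℝ)
    (A : Matrix ι ι ℝ) :
    |dotProduct a (A.mulVec b)| ≤ pen2 a * (matOpNormR A * pen2 b) := by
  have hid : dotProduct a (A.mulVec b)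
      = inner ℝ ((WithLp.equiv 2 (ι → ℝ)).symm a)
          (Matrix.toEuclideanCLM (𝕜 := ℝ) A ((WithLp.equiv 2 (ι → ℝ)).symm b)) := by
    exact (Matrix.inner_toEuclideanCLM A _ _).symm
  rw [hid]
  calc |inner ℝ ((WithLp.equiv 2 (ι → ℝ)).symm a)
          (Matrix.toEuclideanCLM (𝕜 := ℝ) A ((WithLp.equiv 2 (ι → ℝ)).symm b))|
      ≤ ‖(WithLp.equiv 2 (ι → ℝ)).symm a‖ *
          ‖Matrix.toEuclideanCLM (𝕜 := ℝ) A ((WithLp.equiv 2 (ι → ℝ)).symm b)‖ :=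
        abs_real_inner_le_norm _ _
    _ ≤ pen2 a * (matOpNormR A * pen2 b) := by
        apply mul_le_mul_of_nonneg_left _ (pen2_nonneg a)
        exact (Matrix.toEuclideanCLM (𝕜 := ℝ) A).le_opNorm _

lemma abs_apply_le_pen2 {ι : Type*} [Fintype ι] (v : ι → ℝ) (i : ι) : |v i| ≤ pen2 v := by
  rw [pen2_eq_sqrt, ← Real.sqrt_sq_eq_abs]
  apply Real.sqrt_le_sqrt
  exact Finset.single_le_sum (f := fun i => v i ^ 2) (fun j _ => sq_nonneg _) (Finset.mem_univ i)

lemma pen2_le_sum_abs {ι : Type*} [Fintype ι] (v : ι → ℝ) : pen2 v ≤ ∑ i, |v i| := by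
  rw [pen2_eq_sqrt]
  have h : ∑ i, v i ^ 2 ≤ (∑ i, |v i|) ^ 2 := by
    rw [sq (∑ i, |v i|), Finset.sum_mul]
    apply Finset.sum_le_sum
    intro i _
    rw [← sq_abs, sq]
    apply mul_le_mul_of_nonneg_left _ (abs_nonneg _)
    exact Finset.single_le_sum (f := fun i => |v i|) (fun j _ => abs_nonneg _) (Finset.mem_univ i)
  calc Real.sqrt (∑ i, v i ^ 2) ≤ Real.sqrt ((∑ i, |v i|) ^ 2) := Real.sqrt_le_sqrt h
    _ = ∑ i, |v i| := Real.sqrt_sq (by positivity)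

lemma matOpNormR_nonneg {ι : Type*} [Fintype ι] [DecidableEq ι] (A : Matrix ι ι ℝ) :
    0 ≤ matOpNormR A := norm_nonneg _

lemma matOpNormR_pow_le {ι : Type*} [Fintype ι] [DecidableEq ι] (A : Matrix ι ι ℝ) {m : ℕ}
    (hm : 0 < m) : matOpNormR (A ^ m) ≤ matOpNormR A ^ m := by
  rw [matOpNormR, map_pow]
  exact norm_pow_le' _ hm

lemma pen2_single {ι : Type*} [Fintype ι] [DecidableEq ι] (j : ι) :
    pen2 (Pi.single j (1:ℝ)) = 1 := by
  rw [pen2_eq_sqrt]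
  have h : (∑ i : ι, (Pi.single j (1:ℝ) : ι → ℝ) i ^ 2) = 1 := by
    simp [Pi.single_apply]
  rw [h, Real.sqrt_one]

lemma abs_entry_le_opNorm {ι : Type*} [Fintype ι] [DecidableEq ι] (A : Matrix ι ι ℝ) (i j : ι) :
    |A i j| ≤ matOpNormR A := by
  have h1 : A.mulVec (Pi.single j 1) i = A i j := by
    rw [Matrix.mulVec_single]
    simp
  calc |A i j| = |A.mulVec (Pi.single j 1) i| := by rw [h1]
    _ ≤ pen2 (A.mulVec (Pi.single j 1)) := abs_apply_le_pen2 _ _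
    _ ≤ matOpNormR A * pen2 (Pi.single j 1) := mulVec_pen2_le _ _
    _ = matOpNormR A := by rw [pen2_single, mul_one]

lemma matOpNormR_le_sum_abs {ι : Type*} [Fintype ι] [DecidableEq ι] (A : Matrix ι ι ℝ) :
    matOpNormR A ≤ ∑ i, ∑ j, |A i j| := by
  apply opNormR_le_bound _ (by positivity)
  intro v
  calc pen2 (A.mulVec v) ≤ ∑ i, |A.mulVec v i| := pen2_le_sum_abs _
    _ ≤ ∑ i, ∑ j, |A i j| * pen2 v := by
        apply Finset.sum_le_sum
        intro i _
        rw [Matrix.mulVec, dotProduct]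
        calc |∑ j, A i j * v j| ≤ ∑ j, |A i j * v j| := Finset.abs_sum_le_sum_abs _ _
          _ ≤ ∑ j, |A i j| * pen2 v := by
              apply Finset.sum_le_sum
              intro j _
              rw [abs_mul]
              exact mul_le_mul_of_nonneg_left (abs_apply_le_pen2 v j) (abs_nonneg _)
    _ = (∑ i, ∑ j, |A i j|) * pen2 v := by
        rw [Finset.sum_mul]
        exact Finset.sum_congr rfl (fun i _ => by rw [Finset.sum_mul])

/-! ### the two key inequalities -/

variable (X : Fin d → Matrix (Fin n) (Fin n) ℝ)

lemma wordSupR_nonneg (m : ℕ) : 0 ≤ wordSupR X m :=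
  Real.iSup_nonneg fun _ => matOpNormR_nonneg _

lemma matOpNormR_wordProd_le {m : ℕ} (f : Fin m → Fin d) :
    matOpNormR (wordProd X f) ≤ wordSupR X m := by
  have h : wordSupR X m = ⨆ g : Fin m → Fin d, matOpNormR (wordProd X g) := rfl
  rw [h]
  exact le_ciSup (Set.Finite.bddAbove (Set.finite_range
    (fun g : Fin m → Fin d => matOpNormR (wordProd X g)))) f

lemma Lf_iter_isHomogeneous (m : ℕ) {q : MvPolynomial (Fin n) ℝ} {D : ℕ}
    (hq : q.IsHomogeneous D) : ((Lf X)^[m] q).IsHomogeneous D := by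
  induction m with
  | zero => simpa using hq
  | succ m ih => rw [Function.iterate_succ_apply']; exact Lf_isHomogeneous X ih

lemma actMat_pow_apply (m : ℕ) (s t : Sym (Fin n) (2 * k)) :
    (actMat X k ^ m) s t = coeff (tM s) ((Lf X)^[m] (monomial (tM t) (1:ℝ))) := by
  rw [coeff_iter X (monomial_isHomogeneous t) m s]
  rw [Finset.sum_eq_single t]
  · rw [coeff_monomial, if_pos rfl, mul_one]
  · intro b _ hb
    rw [coeff_monomial, if_neg (fun h => hb (tM_injective h).symm), mul_zero]
  · intro h; exact absurd (Finset.mem_univ t) h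

lemma sum_abs_entries_le (m : ℕ) (f : Fin m → Fin d) :
    (∑ j, ∑ l, |wordProd X f j l|) ≤ (n:ℝ)^2 * wordSupR X m := by
  calc (∑ j, ∑ l, |wordProd X f j l|)
      ≤ ∑ j : Fin n, ∑ l : Fin n, wordSupR X m := by
        apply Finset.sum_le_sum; intro j _
        apply Finset.sum_le_sum; intro l _
        exact (abs_entry_le_opNorm _ j l).trans (matOpNormR_wordProd_le X f)
    _ = (n:ℝ)^2 * wordSupR X m := by
        rw [Finset.sum_const, Finset.sum_const]
        simp [nsmul_eq_mul]
        ring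

lemma abs_entry_actMat_pow (m : ℕ) (s t : Sym (Fin n) (2 * k)) :
    |(actMat X k ^ m) s t| ≤ (d:ℝ)^m * ((n:ℝ)^2 * wordSupR X m)^(2*k) := by
  rw [actMat_pow_apply, Lf_iter_eq_sum_words]
  rw [show coeff (tM s) (∑ f : Fin m → Fin d, tauAct (wordProd X f) (monomial (tM t) (1:ℝ)))
    = ∑ f : Fin m → Fin d, coeff (tM s) (tauAct (wordProd X f) (monomial (tM t) (1:ℝ)))
    from coeff_sum _ _ _]
  calc |∑ f : Fin m → Fin d, coeff (tM s) (tauAct (wordProd X f) (monomial (tM t) (1:ℝ)))|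
      ≤ ∑ f : Fin m → Fin d, |coeff (tM s) (tauAct (wordProd X f) (monomial (tM t) (1:ℝ)))| :=
        Finset.abs_sum_le_sum_abs _ _
    _ ≤ ∑ f : Fin m → Fin d, ((n:ℝ)^2 * wordSupR X m)^(2*k) := by
        apply Finset.sum_le_sum
        intro f _
        calc |coeff (tM s) (tauAct (wordProd X f) (monomial (tM t) (1:ℝ)))|
            ≤ l1 (tauAct (wordProd X f) (monomial (tM t) (1:ℝ))) := abs_coeff_le_l1 _ _
          _ ≤ (∑ j, ∑ l, |wordProd X f j l|) ^ (tM t).degree := l1_tauAct_monomial _ _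
          _ = (∑ j, ∑ l, |wordProd X f j l|) ^ (2*k) := by rw [degree_tM]
          _ ≤ ((n:ℝ)^2 * wordSupR X m)^(2*k) := by
              apply pow_le_pow_left₀ (by positivity) (sum_abs_entries_le X m f)
    _ = (d:ℝ)^m * ((n:ℝ)^2 * wordSupR X m)^(2*k) := by
        rw [Finset.sum_const, Finset.card_univ, Fintype.card_fun, nsmul_eq_mul]
        simp

lemma norm_actMat_pow_le (m : ℕ) :
    matOpNormR (actMat X k ^ m)
      ≤ ((Fintype.card (Sym (Fin n) (2*k)) : ℝ))^2
        * ((d:ℝ)^m * ((n:ℝ)^2 * wordSupR X m)^(2*k)) := by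
  calc matOpNormR (actMat X k ^ m) ≤ ∑ s, ∑ t, |(actMat X k ^ m) s t| :=
        matOpNormR_le_sum_abs _
    _ ≤ ∑ _s : Sym (Fin n) (2*k), ∑ _t : Sym (Fin n) (2*k),
          (d:ℝ)^m * ((n:ℝ)^2 * wordSupR X m)^(2*k) := by
        apply Finset.sum_le_sum; intro s _
        apply Finset.sum_le_sum; intro t _
        exact abs_entry_actMat_pow X m s t
    _ = ((Fintype.card (Sym (Fin n) (2*k)) : ℝ))^2
        * ((d:ℝ)^m * ((n:ℝ)^2 * wordSupR X m)^(2*k)) := by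
        rw [Finset.sum_const, Finset.sum_const, Finset.card_univ, nsmul_eq_mul, nsmul_eq_mul]
        ring

/-! ### lower bound -/

lemma linC_isHomogeneous (c : Fin n → ℝ) : (linC c).IsHomogeneous 1 :=
  IsHomogeneous.sum _ _ _ fun l _ => isHomogeneous_C_mul_X _ _

lemma pu_isHomogeneous (u : Fin n → ℝ) : (linC u ^ (2*k)).IsHomogeneous (2*k) := by
  simpa using (linC_isHomogeneous u).pow (2*k)

lemma eval_homog (v : Fin n → ℝ) {q : MvPolynomial (Fin n) ℝ} (hq : q.IsHomogeneous (2*k)) :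
    eval v q = ∑ s : Sym (Fin n) (2*k), eval v (monomial (tM s) (1:ℝ)) * coeff (tM s) q := by
  conv_lhs => rw [homog_decomp hq]
  rw [map_sum]
  apply Finset.sum_congr rfl
  intro s _
  rw [show (monomial (tM s)) (coeff (tM s) q) = C (coeff (tM s) q) * (monomial (tM s)) (1:ℝ)
    from by rw [C_mul_monomial, mul_one], map_mul, eval_C]
  ring

lemma dot_identity (m : ℕ) (u v : Fin n → ℝ) :
    dotProduct (fun s : Sym (Fin n) (2*k) => eval v (monomial (tM s) (1:ℝ)))
      ((actMat X k ^ m).mulVec (fun t : Sym (Fin n) (2*k) => coeff (tM t) (linC u ^ (2*k))))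
    = ∑ f : Fin m → Fin d, (dotProduct u ((wordProd X f).mulVec v)) ^ (2*k) := by
  have h1 : ∀ s : Sym (Fin n) (2*k),
      (actMat X k ^ m).mulVec (fun t : Sym (Fin n) (2*k) => coeff (tM t) (linC u ^ (2*k))) s
      = coeff (tM s) ((Lf X)^[m] (linC u ^ (2*k))) := by
    intro s
    rw [Matrix.mulVec, dotProduct, coeff_iter X (pu_isHomogeneous u) m s]
  rw [dotProduct, Finset.sum_congr rfl (fun s _ => by rw [h1 s])]
  rw [← eval_homog v (Lf_iter_isHomogeneous X m (pu_isHomogeneous u)), eval_iter]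
  apply Finset.sum_congr rfl
  intro f _
  have h2 : eval ((wordProd X f).mulVec v) (linC u)
      = dotProduct u ((wordProd X f).mulVec v) := by
    rw [map_sum, dotProduct]
    apply Finset.sum_congr rfl
    intro j _
    rw [map_mul, eval_C, eval_X]
  rw [map_pow, h2]

lemma support_subset_image {q : MvPolynomial (Fin n) ℝ} (hq : q.IsHomogeneous k) :
    q.support ⊆ Finset.univ.image (tM (n := n) (k := k)) := by
  intro w hw
  have hd := degree_mem_support hq hw
  have hw' : Multiset.card (Finsupp.toMultiset w) = k := by
    rw [Finsupp.card_toMultiset]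
    simpa [Finsupp.degree_apply, Finsupp.sum] using hd
  exact Finset.mem_image.mpr ⟨⟨Finsupp.toMultiset w, hw'⟩, Finset.mem_univ _, by simp [tM]⟩

lemma sum_abs_coeff {q : MvPolynomial (Fin n) ℝ} (hq : q.IsHomogeneous k) :
    ∑ s : Sym (Fin n) k, |coeff (tM s) q| = l1 q := by
  rw [l1_eq_sum_superset (support_subset_image hq),
    Finset.sum_image (fun x _ y _ h => tM_injective h)]

lemma abs_eval_monomial_le (v : Fin n → ℝ) (hv : pen2 v ≤ 1) (s : Sym (Fin n) k) :
    |eval v (monomial (tM s) (1:ℝ))| ≤ 1 := by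
  rw [eval_monomial, one_mul, Finsupp.prod_pow, Finset.abs_prod]
  apply Finset.prod_le_one
  · intro i _; exact abs_nonneg _
  · intro i _
    rw [abs_pow]
    apply pow_le_one₀ (abs_nonneg _)
    exact (abs_apply_le_pen2 v i).trans hv

lemma pen2_le_sqrt_card {ι : Type*} [Fintype ι] (w : ι → ℝ) (h : ∀ i, |w i| ≤ 1) :
    pen2 w ≤ Real.sqrt (Fintype.card ι) := by
  rw [pen2_eq_sqrt]
  apply Real.sqrt_le_sqrt
  calc ∑ i, w i ^ 2 ≤ ∑ _i : ι, (1:ℝ) := by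
        apply Finset.sum_le_sum
        intro i _
        rw [← sq_abs]
        exact pow_le_one₀ (abs_nonneg _) (h i)
    _ = Fintype.card ι := by simp

lemma sum_abs_le_n_pen2 (u : Fin n → ℝ) : (∑ j, |u j|) ≤ (n:ℝ) * pen2 u := by
  calc (∑ j, |u j|) ≤ ∑ _j : Fin n, pen2 u :=
        Finset.sum_le_sum fun j _ => abs_apply_le_pen2 u j
    _ = (n:ℝ) * pen2 u := by rw [Finset.sum_const, Finset.card_univ, Fintype.card_fin,
        nsmul_eq_mul]

lemma pen2_Pvec_le (u : Fin n → ℝ) :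
    pen2 (fun t : Sym (Fin n) (2*k) => coeff (tM t) (linC u ^ (2*k)))
      ≤ ((n:ℝ) * pen2 u) ^ (2*k) := by
  calc pen2 (fun t : Sym (Fin n) (2*k) => coeff (tM t) (linC u ^ (2*k)))
      ≤ ∑ t : Sym (Fin n) (2*k), |coeff (tM t) (linC u ^ (2*k))| := pen2_le_sum_abs _
    _ = l1 (linC u ^ (2*k)) := sum_abs_coeff (pu_isHomogeneous u)
    _ ≤ (∑ j, |u j|) ^ (2*k) := l1_linC_pow u (2*k)
    _ ≤ ((n:ℝ) * pen2 u) ^ (2*k) := pow_le_pow_left₀ (by positivity) (sum_abs_le_n_pen2 u) _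

lemma dot_self_eq_pen2_sq (u : Fin n → ℝ) : dotProduct u u = pen2 u ^ 2 := by
  rw [pen2_eq_sqrt, Real.sq_sqrt (by positivity), dotProduct]
  exact Finset.sum_congr rfl fun i _ => (sq (u i)).symm

lemma pen2_smul {ι : Type*} [Fintype ι] (c : ℝ) (v : ι → ℝ) : pen2 (c • v) = |c| * pen2 v := by
  rw [pen2, pen2, show (WithLp.equiv 2 (ι → ℝ)).symm (c • v)
    = c • (WithLp.equiv 2 (ι → ℝ)).symm v from rfl, norm_smul, Real.norm_eq_abs]

lemma pen2_zero {ι : Type*} [Fintype ι] : pen2 (0 : ι → ℝ) = 0 := by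
  simpa using pen2_smul (0:ℝ) (0 : ι → ℝ)

/-- core lower bound for a single word, unit vector -/
lemma word_pow_le_unit (hk : 0 < k) (m : ℕ) (f : Fin m → Fin d) (v : Fin n → ℝ)
    (hv : pen2 v ≤ 1) :
    pen2 ((wordProd X f).mulVec v) ^ (2*k)
      ≤ (Real.sqrt (Fintype.card (Sym (Fin n) (2*k))) * (n:ℝ)^(2*k))
        * matOpNormR (actMat X k ^ m) := by
  set W := wordProd X f
  set u := W.mulVec v with hu
  set q2 := pen2 u ^ (2*k) with hq2
  have hq2nn : 0 ≤ q2 := by rw [hq2]; exact pow_nonneg (pen2_nonneg u) _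
  set A := Real.sqrt (Fintype.card (Sym (Fin n) (2*k))) * (n:ℝ)^(2*k) with hA
  have hAnn : 0 ≤ A := by rw [hA]; positivity
  have key : q2 * q2 ≤ (A * matOpNormR (actMat X k ^ m)) * q2 := by
    have hlow : q2 * q2 ≤ ∑ g : Fin m → Fin d,
        (dotProduct u ((wordProd X g).mulVec v)) ^ (2*k) := by
      have hterm : (dotProduct u (W.mulVec v)) ^ (2*k) = q2 * q2 := by
        rw [← hu, dot_self_eq_pen2_sq, hq2, ← pow_mul, ← pow_add]
        congr 1
        ring
      rw [← hterm]
      apply Finset.single_le_sum (f := fun g : Fin m → Fin d =>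
        (dotProduct u ((wordProd X g).mulVec v)) ^ (2*k)) _ (Finset.mem_univ f)
      intro g _
      exact Even.pow_nonneg (by exact ⟨k, by ring⟩) _
    have hup : ∑ g : Fin m → Fin d,
        (dotProduct u ((wordProd X g).mulVec v)) ^ (2*k)
        ≤ (A * matOpNormR (actMat X k ^ m)) * q2 := by
      rw [← dot_identity X m u v]
      set Ev : Sym (Fin n) (2*k) → ℝ := fun s => eval v (monomial (tM s) (1:ℝ)) with hEv
      set Pu : Sym (Fin n) (2*k) → ℝ := fun t => coeff (tM t) (linC u ^ (2*k)) with hPu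
      have h1 : dotProduct Ev ((actMat X k ^ m).mulVec Pu)
          ≤ |dotProduct Ev ((actMat X k ^ m).mulVec Pu)| := le_abs_self _
      have h2 : |dotProduct Ev ((actMat X k ^ m).mulVec Pu)|
          ≤ pen2 Ev * (matOpNormR (actMat X k ^ m) * pen2 Pu) := abs_dot_mulVec_le _ _ _
      have h3 : pen2 Ev * (matOpNormR (actMat X k ^ m) * pen2 Pu)
          ≤ Real.sqrt (Fintype.card (Sym (Fin n) (2*k)))
            * (matOpNormR (actMat X k ^ m) * (((n:ℝ) * pen2 u) ^ (2*k))) := by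
        apply mul_le_mul
        · exact pen2_le_sqrt_card _ (fun s => abs_eval_monomial_le v hv s)
        · exact mul_le_mul_of_nonneg_left (pen2_Pvec_le u) (matOpNormR_nonneg _)
        · exact mul_nonneg (matOpNormR_nonneg _) (pen2_nonneg _)
        · exact Real.sqrt_nonneg _
      have h4 : Real.sqrt (Fintype.card (Sym (Fin n) (2*k)))
            * (matOpNormR (actMat X k ^ m) * (((n:ℝ) * pen2 u) ^ (2*k)))
          = (A * matOpNormR (actMat X k ^ m)) * q2 := by
        rw [hA, hq2, mul_pow]
        ring
      linarith
    exact hlow.trans hup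
  rcases eq_or_lt_of_le hq2nn with h0 | hpos
  · rw [← h0]
    exact mul_nonneg hAnn (matOpNormR_nonneg _)
  · exact le_of_mul_le_mul_right key hpos

lemma matOpNormR_word_le (hk : 0 < k) (m : ℕ) (f : Fin m → Fin d) :
    matOpNormR (wordProd X f)
      ≤ ((Real.sqrt (Fintype.card (Sym (Fin n) (2*k))) * (n:ℝ)^(2*k))
        * matOpNormR (actMat X k ^ m)) ^ (((2*k : ℕ) : ℝ)⁻¹) := by
  set R := (Real.sqrt (Fintype.card (Sym (Fin n) (2*k))) * (n:ℝ)^(2*k))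
    * matOpNormR (actMat X k ^ m) with hR
  have hRnn : 0 ≤ R := by
    rw [hR]
    have := matOpNormR_nonneg (actMat X k ^ m)
    positivity
  have h2k : (2*k : ℕ) ≠ 0 := by omega
  apply opNormR_le_bound _ (Real.rpow_nonneg hRnn _)
  intro v
  by_cases hv0 : pen2 v = 0
  · have hvz : v = 0 := by
      funext i
      have h1 := abs_apply_le_pen2 v i
      rw [hv0] at h1
      have := abs_nonneg (v i)
      have : |v i| = 0 := le_antisymm h1 this
      exact abs_eq_zero.mp this
    rw [hvz, Matrix.mulVec_zero, pen2_zero, mul_zero]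
  · have hvpos : 0 < pen2 v := lt_of_le_of_ne (pen2_nonneg v) (Ne.symm hv0)
    set v' := (pen2 v)⁻¹ • v with hv'
    have hv'1 : pen2 v' ≤ 1 := by
      rw [hv', pen2_smul, abs_of_nonneg (by positivity)]
      rw [inv_mul_cancel₀ hv0]
    have hb := word_pow_le_unit X hk m f v' hv'1
    have hx : pen2 ((wordProd X f).mulVec v') ≤ R ^ (((2*k : ℕ) : ℝ)⁻¹) := by
      have hxnn : 0 ≤ pen2 ((wordProd X f).mulVec v') := pen2_nonneg _
      calc pen2 ((wordProd X f).mulVec v')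
          = ((pen2 ((wordProd X f).mulVec v') ^ (2*k : ℕ)) : ℝ) ^ (((2*k : ℕ) : ℝ)⁻¹) :=
            (Real.pow_rpow_inv_natCast hxnn h2k).symm
        _ ≤ R ^ (((2*k : ℕ) : ℝ)⁻¹) := by
            apply Real.rpow_le_rpow (by positivity) _ (by positivity)
            rw [hR]
            exact hb
    have hsc : (wordProd X f).mulVec v = pen2 v • (wordProd X f).mulVec v' := by
      rw [hv', Matrix.mulVec_smul, smul_smul, mul_inv_cancel₀ hv0, one_smul]
    rw [hsc, pen2_smul, abs_of_nonneg (le_of_lt hvpos), mul_comm]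
    exact mul_le_mul_of_nonneg_right hx (le_of_lt hvpos)

lemma wordSup_pow_le (hk : 0 < k) (m : ℕ) :
    wordSupR X m ^ (2*k)
      ≤ (Real.sqrt (Fintype.card (Sym (Fin n) (2*k))) * (n:ℝ)^(2*k))
        * matOpNormR (actMat X k ^ m) := by
  set R := (Real.sqrt (Fintype.card (Sym (Fin n) (2*k))) * (n:ℝ)^(2*k))
    * matOpNormR (actMat X k ^ m) with hR
  have hRnn : 0 ≤ R := by
    rw [hR]
    have := matOpNormR_nonneg (actMat X k ^ m)
    positivity
  have h2k : (2*k : ℕ) ≠ 0 := by omega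
  have hsup : wordSupR X m ≤ R ^ (((2*k : ℕ) : ℝ)⁻¹) := by
    by_cases hne : Nonempty (Fin m → Fin d)
    · apply ciSup_le
      intro f
      exact matOpNormR_word_le X hk m f
    · have hie : IsEmpty (Fin m → Fin d) := not_nonempty_iff.mp hne
      have h0 : wordSupR X m = 0 := Real.iSup_of_isEmpty _
      rw [h0]
      exact Real.rpow_nonneg hRnn _
  calc wordSupR X m ^ (2*k) ≤ (R ^ (((2*k : ℕ) : ℝ)⁻¹)) ^ (2*k) :=
        pow_le_pow_left₀ (wordSupR_nonneg X m) hsup _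
    _ = R := Real.rpow_inv_natCast_pow hRnn h2k

/-! ### analysis part -/

lemma pow_le_imp_le {x R : ℝ} (hx : 0 ≤ x) (hR : 0 ≤ R) {q : ℕ} (hq : q ≠ 0)
    (h : x ^ q ≤ R) : x ≤ R ^ ((q:ℝ)⁻¹) := by
  calc x = (x ^ q) ^ ((q:ℝ)⁻¹) := (Real.pow_rpow_inv_natCast hx hq).symm
    _ ≤ R ^ ((q:ℝ)⁻¹) := Real.rpow_le_rpow (by positivity) h (by positivity)

lemma matOpNormR_one_le {ι : Type*} [Fintype ι] [DecidableEq ι] :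
    matOpNormR (1 : Matrix ι ι ℝ) ≤ 1 := by
  rw [matOpNormR, map_one, ContinuousLinearMap.one_def]
  exact ContinuousLinearMap.norm_id_le

lemma matOpNormR_mul_le {ι : Type*} [Fintype ι] [DecidableEq ι] (A B : Matrix ι ι ℝ) :
    matOpNormR (A * B) ≤ matOpNormR A * matOpNormR B := by
  rw [matOpNormR, map_mul]
  exact norm_mul_le _ _

noncomputable def cBound (X : Fin d → Matrix (Fin n) (Fin n) ℝ) : ℝ :=
  (∑ i, matOpNormR (X i)) + 1

lemma cBound_pos : 0 < cBound X := by
  have h : 0 ≤ ∑ i, matOpNormR (X i) := Finset.sum_nonneg fun i _ => matOpNormR_nonneg _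
  rw [cBound]; linarith

lemma matOpNormR_X_le (i : Fin d) : matOpNormR (X i) ≤ cBound X := by
  rw [cBound]
  have h := Finset.single_le_sum (f := fun i => matOpNormR (X i))
    (fun j _ => matOpNormR_nonneg _) (Finset.mem_univ i)
  linarith

lemma wordProd_succ {m : ℕ} (f : Fin (m+1) → Fin d) :
    wordProd X f = X (f 0) * wordProd X (Fin.tail f) := by
  rw [wordProd, List.ofFn_succ, List.prod_cons]
  rfl

lemma wordProd_norm_le (m : ℕ) (f : Fin m → Fin d) :
    matOpNormR (wordProd X f) ≤ cBound X ^ m := by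
  induction m with
  | zero =>
    have h : wordProd X f = 1 := by rw [wordProd, List.ofFn_zero, List.prod_nil]
    rw [h, pow_zero]
    exact matOpNormR_one_le
  | succ m ih =>
    rw [wordProd_succ, pow_succ']
    calc matOpNormR (X (f 0) * wordProd X (Fin.tail f))
        ≤ matOpNormR (X (f 0)) * matOpNormR (wordProd X (Fin.tail f)) := matOpNormR_mul_le _ _
      _ ≤ cBound X * cBound X ^ m := by
          apply mul_le_mul (matOpNormR_X_le X (f 0)) (ih (Fin.tail f)) (matOpNormR_nonneg _)
          exact le_of_lt (cBound_pos X)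

lemma wordSup_le_pow (m : ℕ) : wordSupR X m ≤ cBound X ^ m := by
  by_cases hne : Nonempty (Fin m → Fin d)
  · exact ciSup_le fun f => wordProd_norm_le X m f
  · have hie : IsEmpty (Fin m → Fin d) := not_nonempty_iff.mp hne
    have h0 : wordSupR X m = 0 := Real.iSup_of_isEmpty _
    rw [h0]
    exact pow_nonneg (le_of_lt (cBound_pos X)) m

lemma x_nonneg (m : ℕ) : 0 ≤ wordSupR X m ^ ((m:ℝ)⁻¹) :=
  Real.rpow_nonneg (wordSupR_nonneg X m) _

lemma x_le (m : ℕ) (hm : m ≠ 0) : wordSupR X m ^ ((m:ℝ)⁻¹) ≤ cBound X := by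
  calc wordSupR X m ^ ((m:ℝ)⁻¹) ≤ (cBound X ^ m) ^ ((m:ℝ)⁻¹) :=
        Real.rpow_le_rpow (wordSupR_nonneg X m) (wordSup_le_pow X m) (by positivity)
    _ = cBound X := Real.pow_rpow_inv_natCast (le_of_lt (cBound_pos X)) hm

lemma x_bdd : IsBoundedUnder (· ≤ ·) atTop (fun m : ℕ => wordSupR X m ^ ((m:ℝ)⁻¹)) := by
  refine ⟨cBound X, ?_⟩
  rw [Filter.eventually_map]
  filter_upwards [Filter.eventually_ge_atTop 1] with m hm
  exact x_le X m (by omega)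

lemma x_cobdd : IsCoboundedUnder (· ≤ ·) atTop (fun m : ℕ => wordSupR X m ^ ((m:ℝ)⁻¹)) :=
  IsBoundedUnder.isCoboundedUnder_le
    ⟨0, Filter.eventually_map.mpr (Filter.Eventually.of_forall fun m => x_nonneg X m)⟩

lemma jsr_nonneg : 0 ≤ jsrR X :=
  le_limsup_of_frequently_le
    ((Filter.Eventually.of_forall fun m => x_nonneg X m).frequently) (x_bdd X)

lemma tendsto_rpow_inv_one (A : ℝ) (hA : 0 < A) :
    Tendsto (fun m : ℕ => A ^ ((m:ℝ)⁻¹)) atTop (nhds 1) := by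
  have h1 : Tendsto (fun m : ℕ => ((m:ℝ))⁻¹) atTop (nhds 0) :=
    tendsto_inv_atTop_zero.comp tendsto_natCast_atTop_atTop
  have h3 := h1.const_mul (Real.log A)
  rw [mul_zero] at h3
  have h4 := (Real.continuous_exp.tendsto 0).comp h3
  rw [Real.exp_zero] at h4
  apply h4.congr
  intro m
  rw [Real.rpow_def_of_pos hA]
  rfl

lemma y_nonneg (k m : ℕ) : 0 ≤ matOpNormR (actMat X k ^ m) ^ ((m:ℝ)⁻¹) :=
  Real.rpow_nonneg (matOpNormR_nonneg _) _

lemma y_le (k m : ℕ) (hm : m ≠ 0) :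
    matOpNormR (actMat X k ^ m) ^ ((m:ℝ)⁻¹) ≤ matOpNormR (actMat X k) + 1 := by
  have hK : 0 ≤ matOpNormR (actMat X k) := matOpNormR_nonneg _
  have h1 : matOpNormR (actMat X k ^ m) ≤ (matOpNormR (actMat X k) + 1) ^ m := by
    calc matOpNormR (actMat X k ^ m) ≤ matOpNormR (actMat X k) ^ m :=
          matOpNormR_pow_le _ (Nat.pos_of_ne_zero hm)
      _ ≤ (matOpNormR (actMat X k) + 1) ^ m :=
          pow_le_pow_left₀ hK (by linarith) m
  calc matOpNormR (actMat X k ^ m) ^ ((m:ℝ)⁻¹)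
      ≤ ((matOpNormR (actMat X k) + 1) ^ m) ^ ((m:ℝ)⁻¹) :=
        Real.rpow_le_rpow (matOpNormR_nonneg _) h1 (by positivity)
    _ = matOpNormR (actMat X k) + 1 := Real.pow_rpow_inv_natCast (by linarith) hm

lemma y_bdd (k : ℕ) :
    IsBoundedUnder (· ≤ ·) atTop (fun m : ℕ => matOpNormR (actMat X k ^ m) ^ ((m:ℝ)⁻¹)) := by
  refine ⟨matOpNormR (actMat X k) + 1, ?_⟩
  rw [Filter.eventually_map]
  filter_upwards [Filter.eventually_ge_atTop 1] with m hm
  exact y_le X k m (by omega)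

lemma y_cobdd (k : ℕ) :
    IsCoboundedUnder (· ≤ ·) atTop (fun m : ℕ => matOpNormR (actMat X k ^ m) ^ ((m:ℝ)⁻¹)) :=
  IsBoundedUnder.isCoboundedUnder_le
    ⟨0, Filter.eventually_map.mpr (Filter.Eventually.of_forall fun m => y_nonneg X k m)⟩

lemma Lk_nonneg (k : ℕ) :
    0 ≤ Filter.limsup (fun m : ℕ => matOpNormR (actMat X k ^ m) ^ ((m:ℝ)⁻¹)) atTop :=
  le_limsup_of_frequently_le
    ((Filter.Eventually.of_forall fun m => y_nonneg X k m).frequently) (y_bdd X k)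

lemma jsr_pow_le_Lk (k : ℕ) (hk : 0 < k) :
    jsrR X ^ (2*k)
      ≤ Filter.limsup (fun m : ℕ => matOpNormR (actMat X k ^ m) ^ ((m:ℝ)⁻¹)) atTop := by
  set L := Filter.limsup (fun m : ℕ => matOpNormR (actMat X k ^ m) ^ ((m:ℝ)⁻¹)) atTop with hL
  have hL0 : 0 ≤ L := Lk_nonneg X k
  have h2k : (2*k : ℕ) ≠ 0 := by omega
  set A' := Real.sqrt (Fintype.card (Sym (Fin n) (2*k))) * (n:ℝ)^(2*k) + 1 with hA'
  have hA'pos : 0 < A' := by rw [hA']; positivity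
  apply le_of_forall_pos_le_add
  intro ε hε
  set c' := L + ε/2 with hc'
  have hc'L : L < c' := by rw [hc']; linarith
  have hc'0 : 0 ≤ c' := by rw [hc']; linarith
  have hev : ∀ᶠ m : ℕ in atTop,
      matOpNormR (actMat X k ^ m) ^ ((m:ℝ)⁻¹) < c' := eventually_lt_of_limsup_lt hc'L (y_bdd X k)
  set δ := (ε/2) / (c' + 1) with hδ
  have hδ0 : 0 < δ := by rw [hδ]; positivity
  have hevA : ∀ᶠ m : ℕ in atTop, A' ^ ((m:ℝ)⁻¹) < 1 + δ :=
    (tendsto_rpow_inv_one A' hA'pos).eventually_lt_const (by linarith)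
  have hx : ∀ᶠ m : ℕ in atTop,
      wordSupR X m ^ ((m:ℝ)⁻¹) ≤ ((1+δ) * c') ^ (((2*k : ℕ):ℝ)⁻¹) := by
    filter_upwards [hev, hevA, Filter.eventually_ge_atTop 1] with m h1 h2 hm
    have hm0 : m ≠ 0 := by omega
    have hxk : (wordSupR X m ^ ((m:ℝ)⁻¹)) ^ (2*k) ≤ (1+δ) * c' := by
      have h3 : wordSupR X m ^ (2*k) ≤ A' * matOpNormR (actMat X k ^ m) := by
        calc wordSupR X m ^ (2*k)
            ≤ (Real.sqrt (Fintype.card (Sym (Fin n) (2*k))) * (n:ℝ)^(2*k))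
              * matOpNormR (actMat X k ^ m) := wordSup_pow_le X hk m
          _ ≤ A' * matOpNormR (actMat X k ^ m) := by
              apply mul_le_mul_of_nonneg_right _ (matOpNormR_nonneg _)
              rw [hA']; linarith
      have h4 : (wordSupR X m ^ (2*k) : ℝ) ^ ((m:ℝ)⁻¹)
          ≤ (A' * matOpNormR (actMat X k ^ m)) ^ ((m:ℝ)⁻¹) := by
        apply Real.rpow_le_rpow _ h3 (by positivity)
        exact pow_nonneg (wordSupR_nonneg X m) _
      have h5 : (wordSupR X m ^ (2*k)) ^ ((m:ℝ)⁻¹)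
          = (wordSupR X m ^ ((m:ℝ)⁻¹)) ^ (2*k) := by
        rw [← Real.rpow_natCast (wordSupR X m) (2*k),
          ← Real.rpow_natCast (wordSupR X m ^ ((m:ℝ)⁻¹)) (2*k),
          ← Real.rpow_mul (wordSupR_nonneg X m),
          ← Real.rpow_mul (wordSupR_nonneg X m),
          mul_comm (((2*k : ℕ):ℝ)) (((m:ℝ))⁻¹)]
      have h6 : (A' * matOpNormR (actMat X k ^ m)) ^ ((m:ℝ)⁻¹)
          = A' ^ ((m:ℝ)⁻¹) * matOpNormR (actMat X k ^ m) ^ ((m:ℝ)⁻¹) :=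
        Real.mul_rpow (le_of_lt hA'pos) (matOpNormR_nonneg _)
      rw [h5, h6] at h4
      calc (wordSupR X m ^ ((m:ℝ)⁻¹)) ^ (2*k)
          ≤ A' ^ ((m:ℝ)⁻¹) * matOpNormR (actMat X k ^ m) ^ ((m:ℝ)⁻¹) := h4
        _ ≤ (1+δ) * c' := by
            apply mul_le_mul (le_of_lt h2) (le_of_lt h1) (y_nonneg X k m) (by linarith)
    exact pow_le_imp_le (x_nonneg X m) (mul_nonneg (by linarith) hc'0) h2k hxk
  have hρ : jsrR X ≤ ((1+δ) * c') ^ (((2*k : ℕ):ℝ)⁻¹) :=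
    limsup_le_of_le (x_cobdd X) hx
  have hfin : jsrR X ^ (2*k) ≤ (1+δ) * c' := by
    calc jsrR X ^ (2*k) ≤ (((1+δ) * c') ^ (((2*k : ℕ):ℝ)⁻¹)) ^ (2*k) :=
          pow_le_pow_left₀ (jsr_nonneg X) hρ _
      _ = (1+δ) * c' := Real.rpow_inv_natCast_pow (mul_nonneg (by linarith) hc'0) h2k
  have hδc : δ * c' ≤ ε/2 := by
    have hq : c' / (c' + 1) ≤ 1 := by
      rw [div_le_one (by linarith)]; linarith
    have heq : δ * c' = (ε/2) * (c' / (c' + 1)) := by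
      rw [hδ]; ring
    rw [heq]
    calc (ε/2) * (c' / (c' + 1)) ≤ (ε/2) * 1 :=
          mul_le_mul_of_nonneg_left hq (by linarith)
      _ = ε/2 := mul_one _
  have heq2 : (1+δ) * c' = c' + δ * c' := by ring
  rw [heq2] at hfin
  calc jsrR X ^ (2*k) ≤ c' + δ * c' := hfin
    _ ≤ c' + ε/2 := by linarith
    _ = L + ε := by rw [hc']; ring

lemma Lk_le (k : ℕ) (hk : 0 < k) :
    Filter.limsup (fun m : ℕ => matOpNormR (actMat X k ^ m) ^ ((m:ℝ)⁻¹)) atTop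
      ≤ ((d:ℝ)+1) * jsrR X ^ (2*k) := by
  set L := Filter.limsup (fun m : ℕ => matOpNormR (actMat X k ^ m) ^ ((m:ℝ)⁻¹)) atTop with hL
  have h2k : (2*k : ℕ) ≠ 0 := by omega
  set B' := ((Fintype.card (Sym (Fin n) (2*k)) : ℝ))^2 * (((n:ℝ)^2)^(2*k)) + 1 with hB'
  have hB'pos : 0 < B' := by rw [hB']; positivity
  have main : ∀ c', jsrR X < c' → L ≤ ((d:ℝ)) * c' ^ (2*k) := by
    intro c' hc'
    have hc'0 : 0 ≤ c' := (jsr_nonneg X).trans (le_of_lt hc')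
    set E := (d:ℝ) * c' ^ (2*k) with hE
    have hE0 : 0 ≤ E := by rw [hE]; positivity
    apply le_of_forall_pos_le_add
    intro ε hε
    set δ := ε / (E + 1) with hδ
    have hδ0 : 0 < δ := by rw [hδ]; positivity
    have hevx : ∀ᶠ m : ℕ in atTop, wordSupR X m ^ ((m:ℝ)⁻¹) < c' :=
      eventually_lt_of_limsup_lt hc' (x_bdd X)
    have hevB : ∀ᶠ m : ℕ in atTop, B' ^ ((m:ℝ)⁻¹) < 1 + δ :=
      (tendsto_rpow_inv_one B' hB'pos).eventually_lt_const (by linarith)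
    have hy : ∀ᶠ m : ℕ in atTop,
        matOpNormR (actMat X k ^ m) ^ ((m:ℝ)⁻¹) ≤ (1+δ) * E := by
      filter_upwards [hevx, hevB, Filter.eventually_ge_atTop 1] with m h1 h2 hm
      have hm0 : m ≠ 0 := by omega
      have hsm : wordSupR X m ≤ c' ^ m := by
        have hs : wordSupR X m = (wordSupR X m ^ ((m:ℝ)⁻¹)) ^ m :=
          (Real.rpow_inv_natCast_pow (wordSupR_nonneg X m) hm0).symm
        rw [hs]
        exact pow_le_pow_left₀ (x_nonneg X m) (le_of_lt h1) m
      have hnorm : matOpNormR (actMat X k ^ m) ≤ B' * E ^ m := by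
        calc matOpNormR (actMat X k ^ m)
            ≤ ((Fintype.card (Sym (Fin n) (2*k)) : ℝ))^2
              * ((d:ℝ)^m * ((n:ℝ)^2 * wordSupR X m)^(2*k)) := norm_actMat_pow_le X m
          _ ≤ ((Fintype.card (Sym (Fin n) (2*k)) : ℝ))^2
              * ((d:ℝ)^m * ((n:ℝ)^2 * c' ^ m)^(2*k)) := by
              apply mul_le_mul_of_nonneg_left _ (by positivity)
              apply mul_le_mul_of_nonneg_left _ (by positivity)
              apply pow_le_pow_left₀ (mul_nonneg (by positivity) (wordSupR_nonneg X m))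
              exact mul_le_mul_of_nonneg_left hsm (by positivity)
          _ = ((Fintype.card (Sym (Fin n) (2*k)) : ℝ))^2 * (((n:ℝ)^2)^(2*k)) * E ^ m := by
              rw [hE, mul_pow, mul_pow, ← pow_mul, ← pow_mul, mul_comm m (2*k)]
              ring
          _ ≤ B' * E ^ m := by
              apply mul_le_mul_of_nonneg_right _ (by positivity)
              rw [hB']; linarith
      calc matOpNormR (actMat X k ^ m) ^ ((m:ℝ)⁻¹)
          ≤ (B' * E ^ m) ^ ((m:ℝ)⁻¹) :=
            Real.rpow_le_rpow (matOpNormR_nonneg _) hnorm (by positivity)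
        _ = B' ^ ((m:ℝ)⁻¹) * (E ^ m) ^ ((m:ℝ)⁻¹) :=
            Real.mul_rpow (le_of_lt hB'pos) (by positivity)
        _ = B' ^ ((m:ℝ)⁻¹) * E := by rw [Real.pow_rpow_inv_natCast hE0 hm0]
        _ ≤ (1+δ) * E := mul_le_mul_of_nonneg_right (le_of_lt h2) hE0
    have hL' : L ≤ (1+δ) * E := limsup_le_of_le (y_cobdd X k) hy
    have hδE : δ * E ≤ ε := by
      have hq : E / (E + 1) ≤ 1 := by rw [div_le_one (by linarith)]; linarith
      have heq : δ * E = ε * (E / (E + 1)) := by rw [hδ]; ring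
      rw [heq]
      calc ε * (E / (E + 1)) ≤ ε * 1 := mul_le_mul_of_nonneg_left hq (by linarith)
        _ = ε := mul_one _
    have heq2 : (1+δ) * E = E + δ * E := by ring
    rw [heq2] at hL'
    calc L ≤ E + δ * E := hL'
      _ ≤ E + ε := by linarith
  have seq : ∀ j : ℕ, L ≤ ((d:ℝ)) * (jsrR X + 1/((j:ℝ)+1)) ^ (2*k) := by
    intro j
    apply main
    have : (0:ℝ) < 1/((j:ℝ)+1) := by positivity
    linarith
  have ht : Tendsto (fun j : ℕ => ((d:ℝ)) * (jsrR X + 1/((j:ℝ)+1)) ^ (2*k)) atTop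
      (nhds (((d:ℝ)) * jsrR X ^ (2*k))) := by
    have h1 : Tendsto (fun j : ℕ => jsrR X + 1/((j:ℝ)+1)) atTop (nhds (jsrR X)) := by
      have h0 := tendsto_one_div_add_atTop_nhds_zero_nat (𝕜 := ℝ)
      have := tendsto_const_nhds (x := jsrR X) (f := atTop (α := ℕ)) |>.add h0
      simpa using this
    have h2 := (h1.pow (2*k)).const_mul ((d:ℝ))
    exact h2
  have hdle : L ≤ ((d:ℝ)) * jsrR X ^ (2*k) := ge_of_tendsto' ht seq
  have hpow : 0 ≤ jsrR X ^ (2*k) := pow_nonneg (jsr_nonneg X) _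
  calc L ≤ ((d:ℝ)) * jsrR X ^ (2*k) := hdle
    _ ≤ ((d:ℝ)+1) * jsrR X ^ (2*k) := by
        apply mul_le_mul_of_nonneg_right _ hpow
        linarith

lemma tendsto_d1_rpow : Tendsto (fun k : ℕ => ((d:ℝ)+1) ^ ((2*(k:ℝ))⁻¹)) atTop (nhds 1) := by
  have h0 : Tendsto (fun k : ℕ => 2*(k:ℝ)) atTop atTop :=
    Tendsto.const_mul_atTop two_pos tendsto_natCast_atTop_atTop
  have h1 : Tendsto (fun k : ℕ => (2*(k:ℝ))⁻¹) atTop (nhds 0) :=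
    tendsto_inv_atTop_zero.comp h0
  have h3 := h1.const_mul (Real.log ((d:ℝ)+1))
  rw [mul_zero] at h3
  have h4 := (Real.continuous_exp.tendsto 0).comp h3
  rw [Real.exp_zero] at h4
  apply h4.congr
  intro k
  rw [Real.rpow_def_of_pos (by positivity)]
  rfl

end Stmt19


/-- the `1/(2k)`-th powers of the spectral radii (Gelfand limits, here
written as `limsup`s, which exist as limits) of `Σᵢ τ_{Xᵢ}` restricted to the homogeneous
polynomials of degree `2k` converge to the joint spectral radius of `(X₁,…,X_d)`. -/
theorem stmt19 {n d : ℕ} (X : Fin d → Matrix (Fin n) (Fin n) ℝ) :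
    Filter.Tendsto (fun k : ℕ =>
      (Filter.limsup (fun m : ℕ => matOpNormR ((actMat X k) ^ m) ^ ((m : ℝ)⁻¹))
          Filter.atTop) ^ ((2 * (k : ℝ))⁻¹))
      Filter.atTop (nhds (jsrR X)) := by
  have hcast : ∀ k : ℕ, ((2 * k : ℕ) : ℝ) = 2 * (k:ℝ) := by intro k; push_cast; ring
  have hlow : ∀ k : ℕ, 0 < k → jsrR X ≤
      (Filter.limsup (fun m : ℕ => matOpNormR ((actMat X k) ^ m) ^ ((m : ℝ)⁻¹))
        Filter.atTop) ^ ((2 * (k : ℝ))⁻¹) := by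
    intro k hk
    have h2k : (2*k : ℕ) ≠ 0 := by omega
    have h1 := Stmt19.jsr_pow_le_Lk (X := X) k hk
    calc jsrR X = (jsrR X ^ (2*k)) ^ (((2*k : ℕ):ℝ)⁻¹) :=
          (Real.pow_rpow_inv_natCast (Stmt19.jsr_nonneg X) h2k).symm
      _ ≤ (Filter.limsup (fun m : ℕ => matOpNormR ((actMat X k) ^ m) ^ ((m : ℝ)⁻¹))
            Filter.atTop) ^ (((2*k : ℕ):ℝ)⁻¹) :=
          Real.rpow_le_rpow (pow_nonneg (Stmt19.jsr_nonneg X) _) h1 (by positivity)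
      _ = (Filter.limsup (fun m : ℕ => matOpNormR ((actMat X k) ^ m) ^ ((m : ℝ)⁻¹))
            Filter.atTop) ^ ((2 * (k : ℝ))⁻¹) := by rw [hcast k]
  have hhigh : ∀ k : ℕ, 0 < k →
      (Filter.limsup (fun m : ℕ => matOpNormR ((actMat X k) ^ m) ^ ((m : ℝ)⁻¹))
        Filter.atTop) ^ ((2 * (k : ℝ))⁻¹) ≤ ((d:ℝ)+1) ^ ((2 * (k:ℝ))⁻¹) * jsrR X := by
    intro k hk
    have h2k : (2*k : ℕ) ≠ 0 := by omega
    have h1 := Stmt19.Lk_le (X := X) k hk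
    calc (Filter.limsup (fun m : ℕ => matOpNormR ((actMat X k) ^ m) ^ ((m : ℝ)⁻¹))
          Filter.atTop) ^ ((2 * (k : ℝ))⁻¹)
        ≤ (((d:ℝ)+1) * jsrR X ^ (2*k)) ^ ((2 * (k : ℝ))⁻¹) :=
          Real.rpow_le_rpow (Stmt19.Lk_nonneg X k) h1 (by positivity)
      _ = ((d:ℝ)+1) ^ ((2 * (k:ℝ))⁻¹) * (jsrR X ^ (2*k)) ^ ((2 * (k : ℝ))⁻¹) :=
          Real.mul_rpow (by positivity) (pow_nonneg (Stmt19.jsr_nonneg X) _)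
      _ = ((d:ℝ)+1) ^ ((2 * (k:ℝ))⁻¹) * jsrR X := by
          rw [← hcast k, Real.pow_rpow_inv_natCast (Stmt19.jsr_nonneg X) h2k]
  have hTu : Filter.Tendsto (fun k : ℕ => ((d:ℝ)+1) ^ ((2*(k:ℝ))⁻¹) * jsrR X)
      Filter.atTop (nhds (jsrR X)) := by
    have := (Stmt19.tendsto_d1_rpow (d := d)).mul_const (jsrR X)
    simpa using this
  apply tendsto_of_tendsto_of_tendsto_of_le_of_le' tendsto_const_nhds hTu
  · filter_upwards [Filter.eventually_ge_atTop 1] with k hk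
    exact hlow k (by omega)
  · filter_upwards [Filter.eventually_ge_atTop 1] with k hk
    exact hhigh k (by omega)
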